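/- arXiv:1808.00775 — 5 statements merged into one kernel-verified Lean document; each statement's English description precedes it below -/
import Mathlib

section
/- In the qualitative state transition graph G_QDE(Σ), if there is an edge (v, v^A) for a nonempty set A ⊆ [n], then for every nonempty proper subset B of A, the edge (v^B, v^A) is also in G_QDE(Σ). -/
def flipS {n : ℕ} (v : Fin n → Bool) (A : Finset (Fin n)) : Fin n → Bool :=
  fun i => if i ∈ A then !(v i) else v i

def oplus (s : ℤ) (a b : Bool) : Bool :=
  if s = -1 then !(xor a b) else xor a b

def edgeQDE {n : ℕ} (σ : Fin n → Fin n → ℤ) (v w : Fin n → Bool) : Prop :=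
  ∀ i, v i ≠ w i → ∃ j, v j = w j ∧ σ i j ≠ 0 ∧ oplus (σ i j) (v i) (v j) = true

def astgEdge {n : ℕ} (f : (Fin n → Bool) → Fin n → Bool) (s t : Fin n → Bool) : Prop :=
  (∃ i, (∀ j, j ≠ i → s j = t j) ∧ s i ≠ t i ∧ f s i = t i) ∨ (s = t ∧ f s = s)

def muSigma {n : ℕ} (σ : Fin n → Fin n → ℤ) (v : Fin n → Bool) (i : Fin n) : Bool :=
  decide (∃ j, j ≠ i ∧ σ i j ≠ 0 ∧ oplus (σ i j) (v i) (v j) = true)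

def fSigma {n : ℕ} (σ : Fin n → Fin n → ℤ) (v : Fin n → Bool) (i : Fin n) : Bool :=
  xor (v i) (muSigma σ v i)

theorem stmt3 {n : ℕ} (σ : Fin n → Fin n → ℤ)
    (hσ : ∀ i j, σ i j = -1 ∨ σ i j = 0 ∨ σ i j = 1)
    (v : Fin n → Bool) (A : Finset (Fin n)) (hA : A.Nonempty)
    (h : edgeQDE σ v (flipS v A)) :
    ∀ B : Finset (Fin n), B ⊆ A → B.Nonempty → B ≠ A → edgeQDE σ (flipS v B) (flipS v A) := by
  intro B hBA _ _ i hi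
  by_cases hiB : i ∈ B
  · exact absurd (by simp [flipS, hiB, hBA hiB]) hi
  · by_cases hiA : i ∈ A
    · have hvi : v i ≠ flipS v A i := by simp [flipS, hiA]
      obtain ⟨j, hj1, hj2, hj3⟩ := h i hvi
      have hjA : j ∉ A := by
        intro hjA
        simp [flipS, hjA] at hj1
      have hjB : j ∉ B := fun hjB => hjA (hBA hjB)
      refine ⟨j, by simp [flipS, hjA, hjB], hj2, ?_⟩
      simpa [flipS, hiB, hjB] using hj3
    · exact absurd (by simp [flipS, hiA, hiB]) hi
end

section
/- If (v, v^A) is an edge of G_QDE(Σ) for a nonempty A ⊆ [n], then there is a directed path in G_QDE(Σ) from v to v^A using only edges (x, x^{i}) that flip a single coordinate. Concretely, for any enumeration i_1, ..., i_k of A, the sequence v, v^{{i_1}}, v^{{i_1,i_2}}, ..., v^A is a directed path in G_QDE(Σ). -/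
theorem stmt4 {n : ℕ} (σ : Fin n → Fin n → ℤ)
    (hσ : ∀ i j, σ i j = -1 ∨ σ i j = 0 ∨ σ i j = 1)
    (v : Fin n → Bool) (A : Finset (Fin n)) (hA : A.Nonempty)
    (h : edgeQDE σ v (flipS v A))
    (l : List (Fin n)) (hnd : l.Nodup) (hl : l.toFinset = A) :
    ∀ k : ℕ, k < l.length →
      edgeQDE σ (flipS v (l.take k).toFinset) (flipS v (l.take (k + 1)).toFinset) := by
  intro k hk i hi
  have htake : l.take (k + 1) = l.take k ++ [l.get ⟨k, hk⟩] := by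
    rw [← List.take_concat_get hk, List.concat_eq_append]; rfl
  generalize ha : l.get ⟨k, hk⟩ = a at htake
  have hset : (l.take (k + 1)).toFinset = insert a (l.take k).toFinset := by
    rw [htake]
    simp [List.toFinset_append]
  have hanot : a ∉ (l.take k).toFinset := by
    intro hc
    have : (l.take (k+1)).Nodup := hnd.sublist (List.take_sublist _ _)
    rw [htake] at this
    rcases List.nodup_append.1 this with ⟨_, _, hdisj⟩
    exact hdisj _ (List.mem_toFinset.1 hc) _ (List.mem_singleton.2 rfl) rfl
  -- i must equal a
  have hia : i = a := by
    by_contra hne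
    apply hi
    simp only [flipS, hset, Finset.mem_insert]
    by_cases hmem : i ∈ (l.take k).toFinset
    · simp [hmem, hne]
    · simp [hmem, hne]
  subst hia
  have hiA : i ∈ A := by
    rw [← ha, ← hl, List.mem_toFinset]; exact List.get_mem l ⟨k, hk⟩
  have hvi : v i ≠ flipS v A i := by
    simp [flipS, hiA]
  obtain ⟨j, hj1, hj2, hj3⟩ := h i hvi
  have hjA : j ∉ A := by
    intro hc
    simp [flipS, hc] at hj1
  have hjk : j ∉ (l.take k).toFinset := fun hc => hjA (by
    rw [← hl]; exact List.mem_toFinset.2 (List.mem_of_mem_take (List.mem_toFinset.1 hc)))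
  have hjk1 : j ∉ (l.take (k+1)).toFinset := fun hc => hjA (by
    rw [← hl]; exact List.mem_toFinset.2 (List.mem_of_mem_take (List.mem_toFinset.1 hc)))
  refine ⟨j, by simp [flipS, hjk, hjk1], hj2, ?_⟩
  have h1 : flipS v (l.take k).toFinset i = v i := by simp [flipS, hanot]
  have h2 : flipS v (l.take k).toFinset j = v j := by simp [flipS, hjk]
  rw [h1, h2]; exact hj3
end

section
/- For distinct states v, w ∈ {0,1}^n, there is a directed path from v to w in G_QDE(Σ) if and only if there is a directed path from v to w in the skeleton, the asynchronous state transition graph of f^Σ defined by f^Σ_i(v) := v_i XOR μ^Σ_i(v), where μ^Σ_i(v) = 1 iff there exists j ≠ i with σ_{i,j} ≠ 0 and v_i ⊕^{σ_{i,j}} v_j = 1. -/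
lemma astg_to_qde {n : ℕ} (σ : Fin n → Fin n → ℤ) (s t : Fin n → Bool)
    (h : astgEdge (fSigma σ) s t) : edgeQDE σ s t := by
  rcases h with ⟨i, hall, hne, hf⟩ | ⟨rfl, _⟩
  · intro i' hi'
    have hii : i' = i := by
      by_contra hcon
      exact hi' (hall i' hcon)
    subst hii
    have hmu : muSigma σ s i' = true := by
      unfold fSigma at hf
      cases hm : muSigma σ s i' <;> simp [hm] at hf <;> simp_all
    rw [muSigma, decide_eq_true_iff] at hmu
    obtain ⟨j, hji, hs, ho⟩ := hmu
    exact ⟨j, hall j hji, hs, ho⟩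
  · intro i hi; exact absurd rfl hi

lemma qde_aux {n : ℕ} (σ : Fin n → Fin n → ℤ) :
    ∀ k (v w : Fin n → Bool),
      (Finset.univ.filter (fun i => v i ≠ w i)).card ≤ k → edgeQDE σ v w →
      Relation.ReflTransGen (astgEdge (fSigma σ)) v w := by
  intro k
  induction k with
  | zero =>
    intro v w hc _
    have : v = w := by
      funext i
      by_contra hi
      have : i ∈ Finset.univ.filter (fun i => v i ≠ w i) := by simp [hi]
      have := Finset.card_pos.mpr ⟨i, this⟩
      omega
    exact this ▸ Relation.ReflTransGen.refl
  | succ k ih =>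
    intro v w hc he
    by_cases hvw : v = w
    · exact hvw ▸ Relation.ReflTransGen.refl
    · have : ∃ i, v i ≠ w i := by
        by_contra hcon
        push_neg at hcon
        exact hvw (funext fun i => hcon i)
      obtain ⟨i, hi⟩ := this
      obtain ⟨j, hvj, hsij, hoij⟩ := he i hi
      set v' := Function.update v i (w i) with hv'
      have hji : j ≠ i := fun h => hi (h ▸ hvj)
      -- edge v → v'
      have hmu : muSigma σ v i = true := by
        rw [muSigma, decide_eq_true_iff]
        exact ⟨j, hji, hsij, hoij⟩
      have hstep : astgEdge (fSigma σ) v v' := by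
        left
        refine ⟨i, fun j' hj' => ?_, ?_, ?_⟩
        · simp [hv', Function.update_of_ne hj']
        · simpa [hv'] using hi
        · simp only [hv', Function.update_self, fSigma, hmu]
          cases hvi : v i <;> cases hwi : w i <;> simp_all
      -- edge v' → w
      have he' : edgeQDE σ v' w := by
        intro i' hi'
        have hii' : i' ≠ i := by
          intro h; subst h; simp [hv'] at hi'
        have hv'i' : v' i' = v i' := Function.update_of_ne hii' _ _
        obtain ⟨j', hvj', hs', ho'⟩ := he i' (by rwa [hv'i'] at hi')
        have hj'i : j' ≠ i := fun h => (h ▸ hvj' : v i = w i) |> hi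
        have hv'j' : v' j' = v j' := Function.update_of_ne hj'i _ _
        exact ⟨j', by rwa [hv'j'], hs', by rwa [hv'i', hv'j']⟩
      -- card decreases
      have hcard : (Finset.univ.filter (fun i' => v' i' ≠ w i')).card ≤ k := by
        have hsub : Finset.univ.filter (fun i' => v' i' ≠ w i') ⊆
            (Finset.univ.filter (fun i' => v i' ≠ w i')).erase i := by
          intro x hx
          simp only [Finset.mem_filter, Finset.mem_univ, true_and] at hx
          have hxi : x ≠ i := by
            intro h; subst h; simp [hv'] at hx
          simp only [Finset.mem_erase, Finset.mem_filter, Finset.mem_univ, true_and]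
          rw [hv', Function.update_of_ne hxi] at hx
          exact ⟨hxi, hx⟩
        have := Finset.card_le_card hsub
        have hmem : i ∈ Finset.univ.filter (fun i' => v i' ≠ w i') := by simp [hi]
        have := Finset.card_erase_of_mem hmem
        omega
      exact Relation.ReflTransGen.head hstep (ih v' w hcard he')

lemma qde_step_to_path {n : ℕ} (σ : Fin n → Fin n → ℤ) (v w : Fin n → Bool)
    (h : edgeQDE σ v w) : Relation.ReflTransGen (astgEdge (fSigma σ)) v w :=
  qde_aux σ _ v w le_rfl h

theorem stmt5 {n : ℕ} (σ : Fin n → Fin n → ℤ)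
    (hσ : ∀ i j, σ i j = -1 ∨ σ i j = 0 ∨ σ i j = 1)
    (v w : Fin n → Bool) (hvw : v ≠ w) :
    Relation.ReflTransGen (edgeQDE σ) v w ↔
      Relation.ReflTransGen (astgEdge (fSigma σ)) v w := by
  clear hvw
  constructor
  · intro h
    induction h with
    | refl => exact Relation.ReflTransGen.refl
    | tail _ hedge ih => exact ih.trans (qde_step_to_path σ _ _ hedge)
  · intro h
    induction h with
    | refl => exact Relation.ReflTransGen.refl
    | tail _ hedge ih => exact ih.tail (astg_to_qde σ _ _ hedge)
end

section
/- The number of non-self-loop edges of the skeleton ASTG of f^Σ is at most the number of non-self-loop edges of G_QDE(Σ), with equality iff every edge (v,w) of G_QDE(Σ) satisfies |diff(v,w)| ≤ 1. More precisely, the set of non-loop edges of the skeleton equals the set of edges (v,w) of G_QDE(Σ) with |diff(v,w)| = 1, which is a subset of the non-loop edges of G_QDE(Σ). -/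
theorem stmt13 {n : ℕ} (σ : Fin n → Fin n → ℤ)
    (hσ : ∀ i j, σ i j = -1 ∨ σ i j = 0 ∨ σ i j = 1) :
    {p : (Fin n → Bool) × (Fin n → Bool) | astgEdge (fSigma σ) p.1 p.2 ∧ p.1 ≠ p.2} =
      {p : (Fin n → Bool) × (Fin n → Bool) |
        edgeQDE σ p.1 p.2 ∧ (Finset.univ.filter fun i => p.1 i ≠ p.2 i).card = 1} ∧
    {p : (Fin n → Bool) × (Fin n → Bool) | astgEdge (fSigma σ) p.1 p.2 ∧ p.1 ≠ p.2} ⊆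
      {p : (Fin n → Bool) × (Fin n → Bool) | edgeQDE σ p.1 p.2 ∧ p.1 ≠ p.2} := by
  have key : ∀ v w : Fin n → Bool,
      (astgEdge (fSigma σ) v w ∧ v ≠ w) ↔
      (edgeQDE σ v w ∧ (Finset.univ.filter fun i => v i ≠ w i).card = 1) := by
    intro v w
    constructor
    · rintro ⟨h, hne⟩
      rcases h with ⟨i, hoth, hi, hf⟩ | ⟨rfl, _⟩
      · have hcard : (Finset.univ.filter fun j => v j ≠ w j) = {i} := by
          ext j
          simp only [Finset.mem_filter, Finset.mem_univ, true_and, Finset.mem_singleton]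
          constructor
          · intro hj; by_contra hji; exact hj (hoth j hji)
          · rintro rfl; exact hi
        refine ⟨?_, by rw [hcard]; simp⟩
        intro k hk
        have hk' : k = i := by by_contra h'; exact hk (hoth k h')
        subst hk'
        have hmu : muSigma σ v k = true := by
          cases hm : muSigma σ v k
          · simp [fSigma, hm] at hf; exact absurd hf hi
          · rfl
        rw [muSigma, decide_eq_true_iff] at hmu
        obtain ⟨j, hji, hs, ho⟩ := hmu
        exact ⟨j, hoth j hji, hs, ho⟩
      · exact absurd rfl hne
    · rintro ⟨hq, hcard⟩
      obtain ⟨i0, hi⟩ := Finset.card_eq_one.mp hcard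
      have hmem : ∀ j, v j ≠ w j ↔ j = i0 := by
        intro j
        constructor
        · intro hj
          have : j ∈ Finset.univ.filter fun k => v k ≠ w k := by
            simp [hj]
          rw [hi] at this; simpa using this
        · rintro rfl
          have : _ ∈ Finset.univ.filter fun k => v k ≠ w k :=
            hi ▸ Finset.mem_singleton_self _
          simpa using this
      have hvi : v i0 ≠ w i0 := (hmem i0).mpr rfl
      have hne : v ≠ w := fun h => hvi (by rw [h])
      refine ⟨Or.inl ⟨i0, ?_, hvi, ?_⟩, hne⟩
      · intro j hj
        by_contra h'
        exact hj ((hmem j).mp h')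
      · obtain ⟨j, hvj, hs, ho⟩ := hq i0 hvi
        have hji : j ≠ i0 := fun h => hvi (h ▸ hvj)
        have hmu : muSigma σ v i0 = true := by
          rw [muSigma, decide_eq_true_iff]; exact ⟨j, hji, hs, ho⟩
        rw [fSigma, hmu]
        cases h : v i0 <;> cases h2 : w i0 <;> simp_all
  constructor
  · ext ⟨v, w⟩
    exact key v w
  · rintro ⟨v, w⟩ h
    have h' := (key v w).mp h
    refine ⟨h'.1, h.2⟩
end

section
/- The relation 'w is reachable from v' in G_QDE(Σ) (existence of a directed path) is identical to the reachability relation in the subgraph of G_QDE(Σ) obtained by keeping only edges (v,w) with |diff(v,w)| ≤ 1. -/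
private lemma edge_to_steps {n : ℕ} (σ : Fin n → Fin n → ℤ) :
    ∀ m (v w : Fin n → Bool), (Finset.univ.filter fun i => v i ≠ w i).card = m →
      edgeQDE σ v w →
      Relation.ReflTransGen (fun a b => edgeQDE σ a b ∧
        (Finset.univ.filter fun i => a i ≠ b i).card ≤ 1) v w := by
  intro m
  induction m using Nat.strong_induction_on with
  | _ m ih =>
    intro v w hcard he
    by_cases h1 : m ≤ 1
    · exact Relation.ReflTransGen.single ⟨he, hcard ▸ h1⟩
    · have hm : 0 < m := by omega
      have hne : (Finset.univ.filter fun i => v i ≠ w i).Nonempty := by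
        rw [← Finset.card_pos, hcard]; exact hm
      obtain ⟨i, hi⟩ := hne
      simp only [Finset.mem_filter] at hi
      set v' := Function.update v i (w i) with hv'
      have hv'i : v' i = w i := Function.update_self ..
      have hv'j : ∀ j, j ≠ i → v' j = v j := fun j hj => Function.update_of_ne hj _ _
      have e1 : edgeQDE σ v v' := by
        intro k hk
        have hki : k = i := by
          by_contra h; exact hk (hv'j k h).symm
        subst hki
        obtain ⟨j, hj1, hj2, hj3⟩ := he k hi.2
        have hji : j ≠ k := by rintro rfl; exact hi.2 hj1
        exact ⟨j, (hv'j j hji).symm, hj2, hj3⟩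
      have c1 : (Finset.univ.filter fun k => v k ≠ v' k).card ≤ 1 := by
        have : (Finset.univ.filter fun k => v k ≠ v' k) ⊆ {i} := by
          intro k hk
          simp only [Finset.mem_filter] at hk
          simp only [Finset.mem_singleton]
          by_contra h
          exact hk.2 (hv'j k h).symm
        calc _ ≤ ({i} : Finset (Fin n)).card := Finset.card_le_card this
          _ = 1 := Finset.card_singleton i
      have e2 : edgeQDE σ v' w := by
        intro k hk
        have hki : k ≠ i := by rintro rfl; exact hk hv'i
        rw [hv'j k hki] at hk
        obtain ⟨j, hj1, hj2, hj3⟩ := he k hk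
        have hji : j ≠ i := by rintro rfl; exact hi.2 hj1
        refine ⟨j, ?_, hj2, ?_⟩
        · rw [hv'j j hji]; exact hj1
        · rw [hv'j j hji, hv'j k hki]; exact hj3
      have hdiff : (Finset.univ.filter fun k => v' k ≠ w k)
          = (Finset.univ.filter fun k => v k ≠ w k).erase i := by
        ext k
        simp only [Finset.mem_filter, Finset.mem_erase, Finset.mem_univ, true_and]
        constructor
        · intro hk
          have hki : k ≠ i := by rintro rfl; exact hk hv'i
          rw [hv'j k hki] at hk
          exact ⟨hki, hk⟩
        · rintro ⟨hki, hk⟩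
          rw [hv'j k hki]; exact hk
      have hc2 : (Finset.univ.filter fun k => v' k ≠ w k).card = m - 1 := by
        rw [hdiff, Finset.card_erase_of_mem, hcard]
        simp only [Finset.mem_filter, Finset.mem_univ, true_and]
        exact hi.2
      exact Relation.ReflTransGen.head ⟨e1, c1⟩
        (ih (m - 1) (by omega) v' w hc2 e2)

theorem stmt17 {n : ℕ} (σ : Fin n → Fin n → ℤ)
    (hσ : ∀ i j, σ i j = -1 ∨ σ i j = 0 ∨ σ i j = 1) :
    ∀ v w : Fin n → Bool,
      Relation.ReflTransGen (edgeQDE σ) v w ↔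
        Relation.ReflTransGen
          (fun a b => edgeQDE σ a b ∧
            (Finset.univ.filter fun i => a i ≠ b i).card ≤ 1) v w := by
  intro v w
  constructor
  · intro h
    induction h with
    | refl => exact Relation.ReflTransGen.refl
    | tail _ he ih =>
      exact ih.trans (edge_to_steps σ _ _ _ rfl he)
  · intro h
    exact Relation.ReflTransGen.mono (fun a b (hab : edgeQDE σ a b ∧ _) => hab.1) v w h
end
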